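/- In the algebra H_c the following identities hold: g·k = k·g; h·k = −k·h; [k, x] = −x (equivalently k·x = x·(k − 1)); and [k, y] = y (equivalently k·y = y·(k + 1)). -/

import Mathlib

noncomputable section

open Polynomial

/-- The primitive `n`-th root of unity `ε = exp(2πi/n)`. -/
def eps (n : ℕ) : ℂ := Complex.exp (2 * Real.pi * Complex.I / n)

/-- The constants `α_q = (1/c_0) Σ_{i=1}^{n-1} c_i ε^{-iq}/(ε^i − 1)`. -/
def alphaOf (n : ℕ) (c : ℤ → ℂ) (q : ℤ) : ℂ :=
  (c 0)⁻¹ * ∑ i ∈ Finset.Ico 1 n, c (i : ℤ) * eps n ^ (-(i : ℤ) * q) / (eps n ^ (i : ℕ) - 1)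

/-- The algebra `H_c = (ℂ[x,y] # 𝔻_n)/(xy − yx − c)` for the dicyclic group `𝔻_n`,
presented by its generators, relations, and PBW basis. -/
structure HcSetup (n : ℕ) where
  hn : 0 < n
  heven : Even n
  H : Type
  [ring : Ring H]
  [alg : Algebra ℂ H]
  x : H
  y : H
  g : H
  h : H
  c : ℤ → ℂ
  c_per : ∀ i : ℤ, c (i + n) = c i
  c_symm : ∀ i : ℤ, c (-i) = c i
  c0_ne : c 0 ≠ 0
  rel_gx : g * x = eps n • (x * g)
  rel_gy : g * y = (eps n)⁻¹ • (y * g)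
  rel_hx : h * x = y * h
  rel_hy : h * y = -(x * h)
  rel_comm : x * y - y * x = ∑ i ∈ Finset.range n, c (i : ℤ) • g ^ i
  rel_gn : g ^ n = 1
  rel_h2 : h ^ 2 = g ^ (n / 2)
  rel_hg : h * g = g ^ (n - 1) * h
  basis : Module.Basis (ℕ × ℕ × Fin n × Fin 2) ℂ H
  basis_eq : ∀ p : ℕ × ℕ × Fin n × Fin 2,
    basis p = x ^ p.1 * y ^ p.2.1 * g ^ (p.2.2.1 : ℕ) * h ^ (p.2.2.2 : ℕ)

attribute [instance] HcSetup.ring HcSetup.alg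

namespace HcSetup

variable {n : ℕ}

/-- `k = (1/c_0)(xy + Σ_{i=1}^{n-1} c_i g^i/(ε^i − 1)) − 1/2`. -/
def k (S : HcSetup n) : S.H :=
  (S.c 0)⁻¹ • (S.x * S.y + ∑ i ∈ Finset.Ico 1 n, (S.c (i : ℤ) / (eps n ^ (i : ℕ) - 1)) • S.g ^ i)
    - (2 : ℂ)⁻¹ • (1 : S.H)

/-- `e_q = (1/n) Σ_{i=0}^{n-1} ε^{iq} g^i`. -/
def e (S : HcSetup n) (q : ℤ) : S.H :=
  (n : ℂ)⁻¹ • ∑ i ∈ Finset.range n, eps n ^ ((i : ℤ) * q) • S.g ^ i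

/-- `α_q = (1/c_0) Σ_{i=1}^{n-1} c_i ε^{-iq}/(ε^i − 1)`. -/
def αc (S : HcSetup n) (q : ℤ) : ℂ := alphaOf n S.c q

end HcSetup

/-- A trace on an algebra: a linear map with `T(ab) = T(ba)`. -/
def IsTrace {n : ℕ} (S : HcSetup n) (T : S.H →ₗ[ℂ] ℂ) : Prop :=
  ∀ a b : S.H, T (a * b) = T (b * a)

/-!
Write `c₀ (k + 1/2) = xy + A` with `A = Σ_{i=1}^{n-1} a_i g^i`, `a_i = c_i/(ε^i − 1)`. Since
`g^i x = ε^i x g^i`, the coefficients `a_i` are chosen so that `[A, x] = Σ_{i≥1} c_i x g^i`, which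
cancels all but the `c₀` term of `[xy, x] = −x [x, y]`; so `[xy + A, x] = −c₀ x`, and likewise
`[xy + A, y] = c₀ y`. For `h`, one has `h·xy + xy·h = [x, y] h`, while `h g^i = g^{n−i} h` and
`c_{n−i} = c_i` turn `hA + Ah` into `Σ_i (a_i + a_{n−i}) g^i h = −Σ_{i≥1} c_i g^i h`, so
`h(xy + A) + (xy + A)h = c₀ h` and `hk + kh = h − h = 0`.
-/

theorem pow_mul_eq_smul_mul_pow {R A : Type*} [CommSemiring R] [Semiring A] [Algebra R A]
    {a b : A} {u : R} (h : a * b = u • (b * a)) :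
    ∀ i : ℕ, a ^ i * b = u ^ i • (b * a ^ i)
  | 0 => by simp
  | i + 1 => by
    rw [pow_succ, mul_assoc, h, mul_smul_comm, ← mul_assoc, pow_mul_eq_smul_mul_pow h i,
      smul_mul_assoc, smul_smul, mul_assoc, ← pow_succ, ← pow_succ']

theorem div_sub_one_mul_inv_sub_one {K : Type*} [Field K] {c u : K} (h0 : u ≠ 0)
    (h1 : u ≠ 1) :
    c / (u - 1) * (u⁻¹ - 1) = -(c * u⁻¹) := by
  have : u - 1 ≠ 0 := sub_ne_zero.mpr h1
  field_simp
  ring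

theorem div_inv_sub_one_add_div_sub_one {K : Type*} [Field K] {c u : K} (h0 : u ≠ 0)
    (h1 : u ≠ 1) :
    c / (u⁻¹ - 1) + c / (u - 1) = -c := by
  have : u - 1 ≠ 0 := sub_ne_zero.mpr h1
  have : 1 - u ≠ 0 := sub_ne_zero.mpr h1.symm
  field_simp
  ring

theorem eps_ne_zero (n : ℕ) : eps n ≠ 0 :=
  Complex.exp_ne_zero _

theorem eps_isPrimitiveRoot {n : ℕ} (hn : n ≠ 0) : IsPrimitiveRoot (eps n) n :=
  Complex.isPrimitiveRoot_exp n hn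

theorem eps_pow_ne_one {n i : ℕ} (hi : i ∈ Finset.Ico 1 n) : eps n ^ i ≠ 1 := by
  rw [Finset.mem_Ico] at hi
  exact (eps_isPrimitiveRoot (by omega)).pow_ne_one_of_pos_of_lt (by omega) hi.2

theorem inv_eps_pow_sub {n i : ℕ} (hi : i ≤ n) : (eps n ^ (n - i))⁻¹ = eps n ^ i := by
  refine inv_eq_of_mul_eq_one_right ?_
  rw [← pow_add, Nat.sub_add_cancel hi]
  rcases Nat.eq_zero_or_pos n with rfl | hn
  · exact pow_zero _
  · exact (eps_isPrimitiveRoot hn.ne').pow_eq_one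

namespace HcSetup

variable {n : ℕ} (S : HcSetup n)

theorem c_sub {i : ℕ} (hi : i ≤ n) : S.c ↑(n - i) = S.c i := by
  rw [Nat.cast_sub hi, sub_eq_neg_add, S.c_per, S.c_symm]

theorem g_pow_mul_x (i : ℕ) : S.g ^ i * S.x = eps n ^ i • (S.x * S.g ^ i) :=
  pow_mul_eq_smul_mul_pow S.rel_gx i

theorem g_pow_mul_y (i : ℕ) : S.g ^ i * S.y = (eps n ^ i)⁻¹ • (S.y * S.g ^ i) := by
  rw [← inv_pow]
  exact pow_mul_eq_smul_mul_pow S.rel_gy i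

theorem h_mul_g_pow : ∀ i ≤ n, S.h * S.g ^ i = S.g ^ (n - i) * S.h
  | 0, _ => by simp [S.rel_gn]
  | i + 1, hi => by
    rw [pow_succ, ← mul_assoc, h_mul_g_pow i (by omega), mul_assoc, S.rel_hg, ← mul_assoc,
      ← pow_add, show n - i + (n - 1) = n - (i + 1) + n by omega, pow_add, S.rel_gn, mul_one]

theorem x_mul_y_sub_y_mul_x :
    S.x * S.y - S.y * S.x = S.c 0 • 1 + ∑ i ∈ Finset.Ico 1 n, S.c i • S.g ^ i := by
  rw [S.rel_comm, Finset.range_eq_Ico, Finset.sum_eq_sum_Ico_succ_bot S.hn, pow_zero,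
    Nat.cast_zero]

def gCorrection : S.H :=
  ∑ i ∈ Finset.Ico 1 n, (S.c i / (eps n ^ i - 1)) • S.g ^ i

theorem k_eq : S.k = (S.c 0)⁻¹ • (S.x * S.y + S.gCorrection) - (2 : ℂ)⁻¹ • 1 := rfl

theorem k_mul_sub_mul_k (b : S.H) :
    S.k * b - b * S.k =
      (S.c 0)⁻¹ • ((S.x * S.y + S.gCorrection) * b - b * (S.x * S.y + S.gCorrection)) := by
  simp only [k_eq, sub_mul, mul_sub, smul_mul_assoc, mul_smul_comm, one_mul, mul_one, smul_sub]
  abel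

theorem gCorrection_mul_sub_mul_gCorrection (b : S.H) :
    S.gCorrection * b - b * S.gCorrection =
      ∑ i ∈ Finset.Ico 1 n, (S.c i / (eps n ^ i - 1)) • (S.g ^ i * b - b * S.g ^ i) := by
  simp only [gCorrection, Finset.sum_mul, Finset.mul_sum, ← Finset.sum_sub_distrib, smul_sub,
    smul_mul_assoc, mul_smul_comm]

theorem commute_g_k : Commute S.g S.k := by
  have hxy : Commute S.g (S.x * S.y) := by
    rw [Commute, SemiconjBy, ← mul_assoc, S.rel_gx, smul_mul_assoc, mul_assoc, S.rel_gy,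
      mul_smul_comm, smul_smul, mul_inv_cancel₀ (eps_ne_zero n), one_smul, mul_assoc]
  have hA : Commute S.g S.gCorrection :=
    Commute.sum_right _ _ _ fun i _ => ((Commute.self_pow S.g i).smul_right _)
  exact ((hxy.add_right hA).smul_right _).sub_right ((Commute.one_right _).smul_right _)

theorem gCorrection_mul_x_sub_x_mul_gCorrection :
    S.gCorrection * S.x - S.x * S.gCorrection =
      ∑ i ∈ Finset.Ico 1 n, S.c i • (S.x * S.g ^ i) := by
  rw [gCorrection_mul_sub_mul_gCorrection]
  refine Finset.sum_congr rfl fun i hi => ?_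
  have hu := sub_ne_zero.mpr (eps_pow_ne_one hi)
  rw [g_pow_mul_x]
  match_scalars
  field_simp

theorem gCorrection_mul_y_sub_y_mul_gCorrection :
    S.gCorrection * S.y - S.y * S.gCorrection =
      -∑ i ∈ Finset.Ico 1 n, S.c i • (S.g ^ i * S.y) := by
  rw [gCorrection_mul_sub_mul_gCorrection, ← Finset.sum_neg_distrib]
  refine Finset.sum_congr rfl fun i hi => ?_
  rw [g_pow_mul_y, smul_smul, ← neg_smul, ← div_sub_one_mul_inv_sub_one
    (pow_ne_zero _ (eps_ne_zero n)) (eps_pow_ne_one hi)]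
  module

theorem h_mul_gCorrection : S.h * S.gCorrection =
    ∑ i ∈ Finset.Ico 1 n, (S.c i / ((eps n ^ i)⁻¹ - 1)) • (S.g ^ i * S.h) := by
  rw [gCorrection, Finset.mul_sum]
  refine Finset.sum_nbij' (n - ·) (n - ·) ?_ ?_ ?_ ?_ ?_ <;>
    intro i hi <;> simp only [Finset.mem_Ico] at hi ⊢
  · omega
  · omega
  · omega
  · omega
  · rw [mul_smul_comm, S.h_mul_g_pow i (by omega), S.c_sub (by omega),
      inv_eps_pow_sub (by omega)]

theorem h_mul_gCorrection_add_gCorrection_mul_h :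
    S.h * S.gCorrection + S.gCorrection * S.h =
      -∑ i ∈ Finset.Ico 1 n, S.c i • (S.g ^ i * S.h) := by
  rw [h_mul_gCorrection, gCorrection, Finset.sum_mul, ← Finset.sum_add_distrib,
    ← Finset.sum_neg_distrib]
  refine Finset.sum_congr rfl fun i hi => ?_
  rw [smul_mul_assoc, ← add_smul, ← neg_smul, div_inv_sub_one_add_div_sub_one
    (pow_ne_zero _ (eps_ne_zero n)) (eps_pow_ne_one hi)]

theorem k_mul_x_sub_x_mul_k : S.k * S.x - S.x * S.k = -S.x := by
  have hxy : S.x * S.y * S.x - S.x * (S.x * S.y) = -(S.x * (S.x * S.y - S.y * S.x)) := by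
    noncomm_ring
  rw [k_mul_sub_mul_k, add_mul, mul_add, add_sub_add_comm, hxy,
    gCorrection_mul_x_sub_x_mul_gCorrection, x_mul_y_sub_y_mul_x, mul_add, mul_smul_comm,
    mul_one, Finset.mul_sum]
  simp only [mul_smul_comm, neg_add, neg_add_cancel_right, smul_neg,
    smul_smul, inv_mul_cancel₀ S.c0_ne, one_smul]

theorem k_mul_y_sub_y_mul_k : S.k * S.y - S.y * S.k = S.y := by
  have hxy : S.x * S.y * S.y - S.y * (S.x * S.y) = (S.x * S.y - S.y * S.x) * S.y := by
    noncomm_ring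
  rw [k_mul_sub_mul_k, add_mul, mul_add, add_sub_add_comm, hxy,
    gCorrection_mul_y_sub_y_mul_gCorrection, x_mul_y_sub_y_mul_x, add_mul, smul_mul_assoc,
    one_mul, Finset.sum_mul]
  simp only [smul_mul_assoc, add_neg_cancel_right, smul_smul, inv_mul_cancel₀ S.c0_ne, one_smul]

theorem h_mul_k_add_k_mul_h : S.h * S.k + S.k * S.h = 0 := by
  have hxy : S.h * (S.x * S.y) + S.x * S.y * S.h = (S.x * S.y - S.y * S.x) * S.h := by
    rw [← mul_assoc, S.rel_hx, mul_assoc, S.rel_hy]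
    noncomm_ring
  have hD : S.h * (S.x * S.y + S.gCorrection) + (S.x * S.y + S.gCorrection) * S.h =
      S.c 0 • S.h := by
    rw [mul_add, add_mul, add_add_add_comm, hxy, h_mul_gCorrection_add_gCorrection_mul_h,
      x_mul_y_sub_y_mul_x, add_mul, smul_mul_assoc, one_mul, Finset.sum_mul]
    simp only [smul_mul_assoc, add_neg_cancel_right]
  calc S.h * S.k + S.k * S.h
      = (S.c 0)⁻¹ • (S.h * (S.x * S.y + S.gCorrection) + (S.x * S.y + S.gCorrection) * S.h)
          - S.h := by
        simp only [k_eq, mul_sub, sub_mul, mul_smul_comm, smul_mul_assoc, mul_one, one_mul]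
        module
    _ = 0 := by rw [hD, smul_smul, inv_mul_cancel₀ S.c0_ne, one_smul, sub_self]

end HcSetup

/-- In `H_c` one has `gk = kg`, `hk = −kh`, `[k,x] = −x` (equivalently
`kx = x(k−1)`) and `[k,y] = y` (equivalently `ky = y(k+1)`). -/
theorem statement0 {n : ℕ} (S : HcSetup n) :
    S.g * S.k = S.k * S.g ∧
    S.h * S.k = -(S.k * S.h) ∧
    S.k * S.x - S.x * S.k = -S.x ∧
    S.k * S.x = S.x * (S.k - 1) ∧
    S.k * S.y - S.y * S.k = S.y ∧
    S.k * S.y = S.y * (S.k + 1) := by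
  refine ⟨S.commute_g_k, eq_neg_of_add_eq_zero_left S.h_mul_k_add_k_mul_h, S.k_mul_x_sub_x_mul_k,
    ?_, S.k_mul_y_sub_y_mul_k, ?_⟩
  · rw [mul_sub, mul_one, sub_eq_iff_eq_add.mp S.k_mul_x_sub_x_mul_k]
    abel
  · rw [mul_add, mul_one, sub_eq_iff_eq_add.mp S.k_mul_y_sub_y_mul_k]
    abel
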